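/- arXiv:1611.05499 — 2 statements merged into one kernel-verified Lean document; each statement's English description precedes it below -/
import Mathlib

section
/- Let q be a prime power and let u be a real number with |u| < 1/q. Then the family of factors (1 - u^{deg φ}), indexed by the monic irreducible polynomials φ over F_q, is multipliable in ℝ and ∏_φ (1 - u^{deg φ}) = 1 - qu. -/
/-!
Taking logarithms, `log (1 - u ^ d) = -∑_{k ≥ 1} u ^ (k d) / k`, so `-∑_φ log (1 - u ^ deg φ)` is a
double series over the pairs `(φ, k)`. The pairs with `k * deg φ = n` contribute
`u ^ n / n * ∑_{deg φ ∣ n} deg φ = (q u) ^ n / n`, because `X ^ q ^ n - X` is the squarefree product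
of the monic irreducibles of degree dividing `n`; summing over `n` gives `-log (1 - q u)`.
The same computation with `|u|` in place of `u` gives the absolute convergence that justifies
the regrouping.
-/

open Polynomial UniqueFactorizationMonoid Real

/-- The `n = 0` term is `x ^ 0 / 0 = 0`. -/
theorem Real.hasSum_pow_div_log_of_abs_lt_one' {x : ℝ} (h : |x| < 1) :
    HasSum (fun n : ℕ => x ^ n / n) (-log (1 - x)) := by
  rw [← hasSum_nat_add_iff' 1]
  simpa using hasSum_pow_div_log_of_abs_lt_one h

theorem hasSum_of_hasSum_fiberwise {β γ : Type*} {f : β → ℝ} (m : β → γ) {g g' : γ → ℝ} {a : ℝ}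
    (hf : ∀ c, HasSum (fun x : {x // m x = c} => f x) (g c))
    (habs : ∀ c, HasSum (fun x : {x // m x = c} => |f x|) (g' c)) (hg' : Summable g')
    (hg : HasSum g a) : HasSum f a := by
  have hsummable : Summable fun σ => |f (Equiv.sigmaFiberEquiv m σ)| :=
    (summable_sigma_of_nonneg fun _ => abs_nonneg _).2
      ⟨fun c => (habs c).summable, hg'.congr fun c => (habs c).tsum_eq.symm⟩
  exact (Equiv.sigmaFiberEquiv m).hasSum_iff.1 (hg.sigma_of_hasSum hf hsummable.of_abs)

theorem hasSum_pow_div_fiber_mul_deg {ι : Type*} (deg : ι → ℕ) (hdeg : ∀ i, 0 < deg i) (q : ℕ)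
    (hcount : ∀ n ≠ 0, ∃ s : Finset ι, (∀ i, i ∈ s ↔ deg i ∣ n) ∧ ∑ i ∈ s, deg i = q ^ n)
    (u : ℝ) (n : ℕ) :
    HasSum (fun x : {x : ι × ℕ // x.2 * deg x.1 = n} => (u ^ deg x.1.1) ^ x.1.2 / x.1.2)
      ((q * u) ^ n / n) := by
  rcases eq_or_ne n 0 with rfl | hn
  -- the fiber over `0` is `{k = 0}`, where every term is `1 / 0 = 0`
  · have hk : ∀ x : {x : ι × ℕ // x.2 * deg x.1 = 0}, x.1.2 = 0 := fun x =>
      (mul_eq_zero.1 x.2).resolve_right (hdeg _).ne'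
    simp [hk]
  obtain ⟨s, hs, hsum⟩ := hcount n hn
  let e : s ≃ {x : ι × ℕ // x.2 * deg x.1 = n} :=
    { toFun := fun i => ⟨(i, n / deg i), Nat.div_mul_cancel ((hs i).1 i.2)⟩
      invFun := fun x => ⟨x.1.1, (hs _).2 (Dvd.intro_left _ x.2)⟩
      left_inv := fun i => rfl
      right_inv := fun x => by
        ext
        · rfl
        · exact Nat.div_eq_of_eq_mul_left (hdeg _) x.2.symm }
  have hsum' : HasSum (fun i : s => u ^ n * deg i / n) (∑ i ∈ s, u ^ n * deg i / n) :=
    s.hasSum _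
  rw [← e.hasSum_iff]
  convert hsum' using 1
  · funext i
    have hd : deg i ∣ n := (hs i).1 i.2
    simp only [Function.comp_apply, e, Equiv.coe_fn_mk, ← pow_mul, Nat.mul_div_cancel' hd]
    rw [Nat.cast_div hd (by exact_mod_cast (hdeg i).ne')]
    field_simp
  · rw [← Finset.sum_div, ← Finset.mul_sum, ← Nat.cast_sum, hsum]
    push_cast
    ring

theorem hasProd_one_sub_pow_of_sum_deg_eq_pow {ι : Type*} (deg : ι → ℕ) (hdeg : ∀ i, 0 < deg i)
    (q : ℕ) (hcount : ∀ n ≠ 0, ∃ s : Finset ι, (∀ i, i ∈ s ↔ deg i ∣ n) ∧ ∑ i ∈ s, deg i = q ^ n)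
    {u : ℝ} (hu : |u| < 1) (hqu : q * |u| < 1) :
    HasProd (fun i => 1 - u ^ deg i) (1 - q * u) := by
  have hpow : ∀ i, |u ^ deg i| < 1 := fun i => by
    rw [abs_pow]; exact pow_lt_one₀ (abs_nonneg u) hu (hdeg i).ne'
  have hqu_abs : |(q : ℝ) * u| < 1 := by rwa [abs_mul, Nat.abs_cast]
  have hterms : HasSum (fun x : ι × ℕ => (u ^ deg x.1) ^ x.2 / x.2) (-log (1 - q * u)) := by
    have habs : |((q : ℝ) * |u|)| < 1 := by rwa [abs_mul, Nat.abs_cast, abs_abs]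
    refine hasSum_of_hasSum_fiberwise (fun x => x.2 * deg x.1)
      (hasSum_pow_div_fiber_mul_deg deg hdeg q hcount u) (fun n => ?_)
      (hasSum_pow_div_log_of_abs_lt_one' habs).summable (hasSum_pow_div_log_of_abs_lt_one' hqu_abs)
    simpa only [abs_div, abs_pow, Nat.abs_cast] using
      hasSum_pow_div_fiber_mul_deg deg hdeg q hcount |u| n
  have hlog : HasSum (fun i => log (1 - u ^ deg i)) (log (1 - q * u)) := by
    have h := hterms.prod_fiberwise (g := fun i => -log (1 - u ^ deg i))
      fun i => hasSum_pow_div_log_of_abs_lt_one' (hpow i)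
    simpa only [neg_neg] using h.neg
  have hpos : ∀ i, 0 < 1 - u ^ deg i := fun i => by linarith [le_abs_self (u ^ deg i), hpow i]
  have hqpos : 0 < 1 - q * u := by linarith [le_abs_self ((q : ℝ) * u)]
  have := Real.hasProd_of_hasSum_log hpos hlog
  rwa [exp_log hqpos] at this

theorem Polynomial.sum_natDegree_toFinset_normalizedFactors {K : Type*} [Field K] [DecidableEq K]
    {P : K[X]} (hP : Squarefree P) :
    ∑ f ∈ (normalizedFactors P).toFinset, f.natDegree = P.natDegree := by
  have hP0 : P ≠ 0 := hP.ne_zero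
  have hnodup := (squarefree_iff_nodup_normalizedFactors hP0).1 hP
  rw [Finset.sum_eq_multiset_sum, Multiset.toFinset_val, hnodup.dedup,
    ← natDegree_multiset_prod_of_monic _ fun f hf =>
      ((Polynomial.mem_normalizedFactors_iff hP0).1 hf).2.1,
    prod_normalizedFactors_eq hP0, natDegree_eq_of_degree_eq degree_normalize]

theorem FiniteField.exists_finset_monic_irreducible_natDegree_dvd (F : Type*) [Field F] [Fintype F]
    {n : ℕ} (hn : n ≠ 0) :
    ∃ s : Finset {f : F[X] // f.Monic ∧ Irreducible f},
      (∀ φ, φ ∈ s ↔ φ.1.natDegree ∣ n) ∧ ∑ φ ∈ s, φ.1.natDegree = Fintype.card F ^ n := by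
  classical
  set q := Fintype.card F
  obtain ⟨p, _⟩ := CharP.exists F
  have hsep : (X ^ q ^ n - X : F[X]).Separable :=
    galois_poly_separable p _ <|
      dvd_pow ((CharP.cast_eq_zero_iff F p q).1 (FiniteField.cast_card_eq_zero F)) hn
  have hP0 := hsep.squarefree.ne_zero
  have hmem : ∀ f, f ∈ normalizedFactors (X ^ q ^ n - X : F[X]) ↔
      (f.Monic ∧ Irreducible f) ∧ f ∣ X ^ q ^ n - X := by
    intro f
    rw [Polynomial.mem_normalizedFactors_iff hP0]
    tauto
  refine ⟨(normalizedFactors (X ^ q ^ n - X : F[X])).toFinset.subtype _, fun φ => ?_, ?_⟩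
  · rw [Finset.mem_subtype, Multiset.mem_toFinset, hmem,
      φ.2.2.natDegree_dvd_iff_dvd_X_pow_card_pow_sub_X, Nat.card_eq_fintype_card]
    exact and_iff_right φ.2
  · rw [Finset.sum_subtype_of_mem natDegree fun f hf =>
        ((hmem f).1 (Multiset.mem_toFinset.1 hf)).1,
      sum_natDegree_toFinset_normalizedFactors hsep.squarefree,
      FiniteField.X_pow_card_pow_sub_X_natDegree_eq F hn Fintype.one_lt_card]

theorem prod_monic_irreducible_general
    (q : ℕ)
    (F : Type) [Field F] [Fintype F] (hF : Fintype.card F = q)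
    (u : ℝ) (hu : |u| < 1 / q) :
    Multipliable (fun φ : {f : Polynomial F // f.Monic ∧ Irreducible f} =>
      1 - u ^ φ.val.natDegree) ∧
    ∏' φ : {f : Polynomial F // f.Monic ∧ Irreducible f}, (1 - u ^ φ.val.natDegree) =
      1 - q * u := by
  subst hF
  have hq : (1 : ℝ) ≤ Fintype.card F := by exact_mod_cast Fintype.card_pos
  have hqu : (Fintype.card F : ℝ) * |u| < 1 := by rwa [lt_div_iff₀' (by positivity)] at hu
  have hu1 : |u| < 1 := (le_mul_of_one_le_left (abs_nonneg u) hq).trans_lt hqu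
  have h := hasProd_one_sub_pow_of_sum_deg_eq_pow
    (fun φ : {f : F[X] // f.Monic ∧ Irreducible f} => φ.1.natDegree)
    (fun φ => φ.2.2.natDegree_pos) _
    (fun _ hn => FiniteField.exists_finset_monic_irreducible_natDegree_dvd F hn) hu1 hqu
  exact ⟨h.multipliable, h.tprod_eq⟩

theorem prod_monic_irreducible
    (q : ℕ) (hq : ∃ p m : ℕ, p.Prime ∧ 0 < m ∧ q = p ^ m)
    (F : Type) [Field F] [Fintype F] (hF : Fintype.card F = q)
    (u : ℝ) (hu : |u| < 1 / q) :
    Multipliable (fun φ : {f : Polynomial F // f.Monic ∧ Irreducible f} =>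
      1 - u ^ φ.val.natDegree) ∧
    ∏' φ : {f : Polynomial F // f.Monic ∧ Irreducible f}, (1 - u ^ φ.val.natDegree) =
      1 - q * u :=
  prod_monic_irreducible_general q F hF u hu
end

section
/- Let q be a prime power, n ≥ 1, and let A be an n×n Hermitian matrix over F_{q²} (i.e. A* = A). Then the square of the number of Hermitian n×n matrices B over F_{q²} with AB = BA equals the number of all n×n matrices B over F_{q²} with AB = BA. -/
open Matrix

private def madj {K : Type} [Field K] {n : ℕ} (σ : K →+* K)
    (B : Matrix (Fin n) (Fin n) K) : Matrix (Fin n) (Fin n) K := (B.map σ)ᵀ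

private lemma madj_add {K : Type} [Field K] {n : ℕ} (σ : K →+* K)
    (M N : Matrix (Fin n) (Fin n) K) : madj σ (M + N) = madj σ M + madj σ N := by
  unfold madj
  rw [Matrix.map_add _ (fun a b => map_add σ a b), transpose_add]

private lemma madj_sub {K : Type} [Field K] {n : ℕ} (σ : K →+* K)
    (M N : Matrix (Fin n) (Fin n) K) : madj σ (M - N) = madj σ M - madj σ N := by
  unfold madj
  rw [Matrix.map_sub _ (fun a b => map_sub σ a b), transpose_sub]

private lemma madj_smul {K : Type} [Field K] {n : ℕ} (σ : K →+* K)
    (x : K) (M : Matrix (Fin n) (Fin n) K) : madj σ (x • M) = σ x • madj σ M := by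
  ext i j
  simp [madj, smul_eq_mul]

private lemma madj_mul {K : Type} [Field K] {n : ℕ} (σ : K →+* K)
    (M N : Matrix (Fin n) (Fin n) K) : madj σ (M * N) = madj σ N * madj σ M := by
  unfold madj
  rw [Matrix.map_mul, transpose_mul]

private lemma madj_madj {K : Type} [Field K] {n : ℕ} (σ : K →+* K)
    (hσσ : ∀ x, σ (σ x) = x) (M : Matrix (Fin n) (Fin n) K) : madj σ (madj σ M) = M := by
  ext i j
  simp [madj, hσσ]

private theorem aux_card {K : Type} [Field K] {n : ℕ} (σ : K →+* K)
    (hσσ : ∀ x, σ (σ x) = x) (c : K) (hc : σ c ≠ c)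
    (A : Matrix (Fin n) (Fin n) K) (hA : madj σ A = A) :
    Nat.card {B : Matrix (Fin n) (Fin n) K // madj σ B = B ∧ A * B = B * A} ^ 2 =
      Nat.card {B : Matrix (Fin n) (Fin n) K // A * B = B * A} := by
  have hsub : c - σ c ≠ 0 := sub_ne_zero.mpr (Ne.symm hc)
  set d : K := (c - σ c)⁻¹ with hd
  have hσd : σ d = -d := by
    rw [hd, map_inv₀, map_sub, hσσ, show σ c - c = -(c - σ c) by ring, inv_neg]
  -- A commutes with madj of a commuting matrix
  have hcomm : ∀ B : Matrix (Fin n) (Fin n) K, A * B = B * A → A * madj σ B = madj σ B * A := by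
    intro B h
    have h2 := congrArg (madj σ) h
    rw [madj_mul, madj_mul, hA] at h2
    exact h2.symm
  -- the bijection
  set H := {B : Matrix (Fin n) (Fin n) K // madj σ B = B ∧ A * B = B * A} with hH
  set C := {B : Matrix (Fin n) (Fin n) K // A * B = B * A} with hC
  have key : Nat.card (H × H) = Nat.card C := by
    apply Nat.card_congr
    refine Equiv.ofBijective (fun P => ⟨P.1.1 + c • P.2.1, ?_⟩) ⟨?_, ?_⟩
    · rw [mul_add, add_mul, P.1.2.2, Matrix.mul_smul, Matrix.smul_mul, P.2.2.2]
    · rintro ⟨⟨X, hX, hXc⟩, ⟨Y, hY, hYc⟩⟩ ⟨⟨X', hX', hXc'⟩, ⟨Y', hY', hYc'⟩⟩ h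
      have h1 : X + c • Y = X' + c • Y' := congrArg Subtype.val h
      have h2 : X + σ c • Y = X' + σ c • Y' := by
        have := congrArg (madj σ) h1
        rwa [madj_add, madj_add, madj_smul, madj_smul, hX, hY, hX', hY'] at this
      have h3 : (c - σ c) • (Y - Y') = 0 := by
        have h4 := congrArg₂ (· - ·) h1 h2
        simp only [add_sub_add_left_eq_sub] at h4
        rw [smul_sub, sub_smul, sub_smul, h4, sub_self]
      have hYY : Y = Y' := by
        have : Y - Y' = 0 := by
          have := congrArg (fun M => d • M) h3
          simpa [hd, smul_smul, inv_mul_cancel₀ hsub] using this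
        exact sub_eq_zero.mp this
      have hXX : X = X' := by
        have := h1
        rw [hYY] at this
        exact add_right_cancel this
      simp only [Prod.mk.injEq]
      exact ⟨Subtype.ext hXX, Subtype.ext hYY⟩
    · rintro ⟨B, hB⟩
      set Y : Matrix (Fin n) (Fin n) K := d • (B - madj σ B) with hYdef
      set X : Matrix (Fin n) (Fin n) K := B - c • Y with hXdef
      have hYherm : madj σ Y = Y := by
        rw [hYdef, madj_smul, madj_sub, madj_madj σ hσσ, hσd]
        rw [neg_smul, ← smul_neg, neg_sub]
      have hXherm : madj σ X = X := by
        rw [hXdef, madj_sub, madj_smul, hYherm]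
        have hq : B - madj σ B = (c - σ c) • Y := by
          rw [hYdef, smul_smul, mul_inv_cancel₀ hsub, one_smul]
        have : madj σ B = B - (c - σ c) • Y := by rw [← hq]; abel
        rw [this, sub_smul]
        abel
      have hYcomm : A * Y = Y * A := by
        rw [hYdef, Matrix.mul_smul, Matrix.smul_mul, mul_sub, sub_mul, hB, hcomm B hB]
      have hXcomm : A * X = X * A := by
        rw [hXdef, mul_sub, sub_mul, hB, Matrix.mul_smul, Matrix.smul_mul, hYcomm]
      refine ⟨⟨⟨X, hXherm, hXcomm⟩, ⟨Y, hYherm, hYcomm⟩⟩, ?_⟩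
      apply Subtype.ext
      show X + c • Y = B
      rw [hXdef]
      abel
  rw [← key, Nat.card_prod, sq]

theorem sq_card_hermitian_centralizer
    (q : ℕ) (hq : ∃ p m : ℕ, p.Prime ∧ 0 < m ∧ q = p ^ m)
    (K : Type) [Field K] [Fintype K] (hK : Fintype.card K = q ^ 2)
    (n : ℕ) (hn : 1 ≤ n) (A : Matrix (Fin n) (Fin n) K)
    (hA : (A.map (fun a => a ^ q))ᵀ = A) :
    (Nat.card {B : Matrix (Fin n) (Fin n) K //
        (B.map (fun a => a ^ q))ᵀ = B ∧ A * B = B * A}) ^ 2 =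
      Nat.card {B : Matrix (Fin n) (Fin n) K // A * B = B * A} := by
  classical
  obtain ⟨p, m, hp, hm, rfl⟩ := hq
  haveI : Fact p.Prime := ⟨hp⟩
  set q := p ^ m with hqdef
  have hq1 : 1 < q := Nat.one_lt_pow hm.ne' hp.one_lt
  -- characteristic
  have hrc : ringChar K = p := by
    have h0 : ((q ^ 2 : ℕ) : K) = 0 := by
      rw [← hK]; exact FiniteField.cast_card_eq_zero K
    have hdvd : ringChar K ∣ q ^ 2 := (CharP.cast_eq_zero_iff K (ringChar K) _).mp h0
    have hrp : (ringChar K).Prime := CharP.char_is_prime K (ringChar K)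
    have : ringChar K ∣ p := by
      have h1 : ringChar K ∣ p ^ (m * 2) := by
        rwa [hqdef, ← pow_mul] at hdvd
      exact hrp.dvd_of_dvd_pow h1
    exact (Nat.prime_dvd_prime_iff_eq hrp hp).mp this
  haveI : CharP K p := hrc ▸ ringChar.charP K
  set σ : K →+* K := iterateFrobenius K p m with hσdef
  have hσ : ∀ x : K, σ x = x ^ q := fun x => rfl
  have hσσ : ∀ x : K, σ (σ x) = x := by
    intro x
    rw [hσ, hσ, ← pow_mul, show q * q = Fintype.card K by rw [hK, sq]]
    exact FiniteField.pow_card x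
  have hfun : (fun a : K => a ^ q) = ⇑σ := funext fun x => (hσ x).symm
  -- existence of a non-fixed point of σ
  obtain ⟨c, hc⟩ : ∃ c : K, σ c ≠ c := by
    by_contra h
    push_neg at h
    have hall : ∀ x : Kˣ, x ^ (q - 1) = 1 := by
      intro x
      have hx : (x : K) ^ q = x := by rw [← hσ]; exact h x
      have hxq : x ^ q = x := Units.ext (by rw [Units.val_pow_eq_pow_val]; exact hx)
      have hstep : x ^ (q - 1) * x = 1 * x := by
        rw [← pow_succ, Nat.sub_add_cancel hq1.le, hxq, one_mul]
      exact mul_right_cancel hstep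
    have hdvd := (FiniteField.forall_pow_eq_one_iff (K := K) (q - 1)).mp hall
    rw [hK] at hdvd
    have hle : q ^ 2 - 1 ≤ q - 1 := Nat.le_of_dvd (by omega) hdvd
    have : 2 * q ≤ q * q := Nat.mul_le_mul_right q hq1
    have hq2 : q ^ 2 = q * q := sq q
    omega
  have hA' : madj σ A = A := by
    unfold madj; rw [← hfun]; exact hA
  have := aux_card σ hσσ c hc A hA'
  simp only [hfun]
  unfold madj at this
  exact this
end
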